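/- Let (M, g) be a Riemannian manifold, W a vector field with |W|_g < 1, λ = 1 − |W|_g², W_i = g_{ij}W^j, and define α_{ij} = g_{ij}/λ + (W_i/λ)(W_j/λ) and β_i = −W_i/λ. Then α is a Riemannian metric (symmetric and positive definite) and the dual norm of β with respect to α satisfies |β|_α < 1, so F = F_α + β is a Randers metric. -/
import Mathlib


open Set

noncomputable section

abbrev Evec (n : ℕ) := EuclideanSpace ℝ (Fin n)

/-- Zermelo navigation data: given a Riemannian metric `g` and a
vector field `W` with `|W|_g < 1`, setting `λ = 1 - |W|_g²`,
`α(u,v) = g(u,v)/λ + (g(W,u)/λ)(g(W,v)/λ)` and `β(y) = -g(W,y)/λ`, the form `α` is a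
Riemannian metric (symmetric positive definite) and the dual norm of `β` with respect
to `α` is `< 1`, so `F = F_α + β` is a Randers metric. -/
theorem stmt19 {n : ℕ} (s : Set (Evec n))
    (g : Evec n → (Evec n →L[ℝ] Evec n →L[ℝ] ℝ)) (hg : ContDiff ℝ (⊤ : ℕ∞) g)
    (hsymm : ∀ x u v, g x u v = g x v u)
    (hpos : ∀ x, ∀ y : Evec n, y ≠ 0 → 0 < g x y y)
    (W : Evec n → Evec n) (hW : ContDiff ℝ (⊤ : ℕ∞) W)
    (hWsmall : ∀ x ∈ s, g x (W x) (W x) < 1)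
    (lam : Evec n → ℝ) (hlam : ∀ x, lam x = 1 - g x (W x) (W x))
    (α : Evec n → Evec n → Evec n → ℝ)
    (hα : ∀ x u v, α x u v = g x u v / lam x + (g x (W x) u / lam x) * (g x (W x) v / lam x))
    (β : Evec n → Evec n → ℝ)
    (hβ : ∀ x y, β x y = -(g x (W x) y) / lam x) :
    ∀ x ∈ s,
      (∀ u v : Evec n, α x u v = α x v u) ∧
      (∀ y : Evec n, y ≠ 0 → 0 < α x y y) ∧
      (∀ y : Evec n, α x y y = 1 → β x y < 1) := by
  intro x hx
  have hc : 0 ≤ g x (W x) (W x) := by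
    rcases eq_or_ne (W x) 0 with h | h
    · simp [h]
    · exact (hpos x _ h).le
  have hlampos : 0 < lam x := by rw [hlam]; linarith [hWsmall x hx]
  refine ⟨fun u v => ?_, fun y hy => ?_, fun y h1 => ?_⟩
  · rw [hα, hα, hsymm x u v]; ring
  · rw [hα]
    have h1 := hpos x y hy
    have h2 : 0 < g x y y / lam x := div_pos h1 hlampos
    nlinarith [sq_nonneg (g x (W x) y / lam x)]
  · have hy : y ≠ 0 := by
      rintro rfl
      rw [hα] at h1
      simp at h1
    have ha : 0 < g x y y := hpos x y hy
    rw [hα] at h1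
    rw [hβ]
    rw [div_lt_one hlampos]
    have key : g x y y * lam x + g x (W x) y * g x (W x) y = lam x * lam x := by
      field_simp at h1
      nlinarith [h1]
    nlinarith [mul_pos ha hlampos]
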